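/- Let T > 0. There exists a unique continuously differentiable map t ↦ ϑ(t,·) from [0,T] to C[0,1] (derivative taken in the supremum norm) such that ϑ(0,·) = φ and (d/dt)ϑ(t,·) = P₉ϑ(t,·) + l̂_{1,t} for all t ∈ [0,T]. Moreover, ϑ is jointly continuous on [0,T]×[0,1], and the unique solution θ of the dual-valued equation (d/dt)θ_t = P₂*θ_t + l_{1,t} with θ₀(f) = ∫₀¹φ(u)f(u)du satisfies θ_t(f) = ∫₀¹ϑ(t,u)f(u)du for all t ∈ [0,T] and f ∈ C[0,1]. -/

import Mathlib

/-!
Both equations are linear with bounded generators, so the solution on `[0,T]` is given by the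
variation-of-constants formula and is unique by Grönwall's inequality; the source `l̂₁` is
continuous in `t` because it is the image of `ρ` under a continuous quadratic map. Pairing with
`∫ ϑ(t,u) f(u) du` intertwines `P₉` with the precomposition by `P₂` (Fubini swaps the
kernels) and sends `l̂₁` to `l₁`, so `t ↦ ∫ ϑ(t,·) ·` solves the dual equation and equals `θ`
by uniqueness.
-/

open MeasureTheory Set

noncomputable section

abbrev I01 : Set ℝ := Set.Icc 0 1

section LinearODE

variable {E : Type*} [NormedAddCommGroup E] [NormedSpace ℝ E] (A : E →L[ℝ] E) (L : ℝ → E)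

theorem linear_ODE_solution_unique {a b : ℝ} {f g : ℝ → E}
    (hf : ∀ t ∈ Icc a b, HasDerivWithinAt f (A (f t) + L t) (Icc a b) t)
    (hg : ∀ t ∈ Icc a b, HasDerivWithinAt g (A (g t) + L t) (Icc a b) t)
    (ha : f a = g a) : EqOn f g (Icc a b) := by
  have hIci {x : ℝ → E}
      (hx : ∀ t ∈ Icc a b, HasDerivWithinAt x (A (x t) + L t) (Icc a b) t) :
      ∀ t ∈ Ico a b, HasDerivWithinAt x (A (x t) + L t) (Ici t) t := fun t ht =>
    (hx t (Ico_subset_Icc_self ht)).mono_of_mem_nhdsWithin (Icc_mem_nhdsGE_of_mem ht)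
  have hlip (t : ℝ) : LipschitzOnWith ‖A‖₊ (fun x => A x + L t) univ :=
    (LipschitzWith.of_dist_le_mul fun x y => by
      simpa only [dist_add_right] using A.lipschitz.dist_le_mul x y).lipschitzOnWith
  exact ODE_solution_unique_of_mem_Icc_right (fun t _ => hlip t)
    (fun t ht => (hf t ht).continuousWithinAt) (hIci hf) (fun _ _ => mem_univ _)
    (fun t ht => (hg t ht).continuousWithinAt) (hIci hg) (fun _ _ => mem_univ _) ha

open NormedSpace in
theorem exists_linear_ODE_solution [CompleteSpace E] (hL : Continuous L) (x₀ : E) :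
    ∃ x : ℝ → E, x 0 = x₀ ∧ ∀ t, HasDerivAt x (A (x t) + L t) t := by
  set U : ℝ → E →L[ℝ] E := fun t => exp (t • A)
  have hU (t : ℝ) : HasDerivAt U (U t * A) t := hasDerivAt_exp_smul_const A t
  have hU_comm (t : ℝ) : U t * A = A * U t := (((Commute.refl A).smul_left t).exp_left).eq
  have hU_neg (t : ℝ) : U t * U (-t) = 1 := by
    -- `exp_add_of_commute` is stated for `ℚ`-algebras
    let : NormedAlgebra ℚ (E →L[ℝ] E) := .restrictScalars ℚ ℝ _
    rw [← exp_add_of_commute (((Commute.refl A).smul_left t).smul_right (-t)), neg_smul,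
      add_neg_cancel, exp_zero]
  have hg : Continuous fun s => U (-s) (L s) :=
    ((continuous_iff_continuousAt.2 fun t => (hU t).continuousAt).comp continuous_neg).clm_apply hL
  set ψ : ℝ → E := fun t => x₀ + ∫ s in (0 : ℝ)..t, U (-s) (L s)
  have hψ (t : ℝ) : HasDerivAt ψ (U (-t) (L t)) t :=
    (hg.integral_hasStrictDerivAt 0 t).hasDerivAt.const_add x₀
  refine ⟨fun t => U t (ψ t), by simp [U, ψ], fun t => ?_⟩
  convert (hU t).clm_apply (hψ t) using 1
  rw [hU_comm, mul_apply_eq_comp, ← mul_apply_eq_comp (U t), hU_neg, one_apply_eq_self]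

theorem linear_ODE_solution_map {G : Type*} [NormedAddCommGroup G] [NormedSpace ℝ G]
    (J : E →L[ℝ] G) {B : G →L[ℝ] G} {M : ℝ → G} (hJA : ∀ x, J (A x) = B (J x))
    (hJL : ∀ t, J (L t) = M t) {a b : ℝ} {x : ℝ → E} {y : ℝ → G}
    (hx : ∀ t ∈ Icc a b, HasDerivWithinAt x (A (x t) + L t) (Icc a b) t)
    (hy : ∀ t ∈ Icc a b, HasDerivWithinAt y (B (y t) + M t) (Icc a b) t)
    (ha : y a = J (x a)) : EqOn y (fun t => J (x t)) (Icc a b) := by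
  refine linear_ODE_solution_unique B M hy (fun t ht => ?_) ha
  have := J.hasFDerivAt.comp_hasDerivWithinAt t (hx t ht)
  rwa [map_add, hJA, hJL] at this

end LinearODE

section IntegralPairing

variable {X : Type*} [TopologicalSpace X] [CompactSpace X] [MeasurableSpace X] [BorelSpace X]
  (μ : Measure X) [IsFiniteMeasure μ]

def integralPairing : C(X, ℝ) →L[ℝ] C(X, ℝ) →L[ℝ] ℝ :=
  ContinuousLinearMap.compL ℝ C(X, ℝ) C(X, ℝ) ℝ
      ((L1.integralCLM).comp (ContinuousMap.toLp 1 μ ℝ)) ∘L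
    ContinuousLinearMap.mul ℝ C(X, ℝ)

theorem integralPairing_apply (g f : C(X, ℝ)) :
    integralPairing μ g f = ∫ x, g x * f x ∂μ := by
  change L1.integralCLM (ContinuousMap.toLp 1 μ ℝ (g * f)) = _
  rw [← L1.integral_eq, L1.integral_eq_integral]
  exact integral_congr_ae (ContinuousMap.coeFn_toLp μ (g * f))

theorem integralPairing_mul_left (m g f : C(X, ℝ)) :
    integralPairing μ (m * g) f = integralPairing μ g (m * f) := by
  simp only [integralPairing_apply, ContinuousMap.mul_apply]
  congr 1 with x
  ring

def integralOperator (k : C(X × X, ℝ)) : C(X, ℝ) →L[ℝ] C(X, ℝ) :=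
  LinearMap.mkContinuous
    { toFun g := ⟨fun u => integralPairing μ (k.curry u) g,
        ((integralPairing μ).flip g).continuous.comp k.curry.continuous⟩
      map_add' g h := by ext u; exact map_add (integralPairing μ (k.curry u)) g h
      map_smul' r g := by ext u; exact map_smul (integralPairing μ (k.curry u)) r g }
    (‖k‖ * μ.real univ)
    (fun g => (ContinuousMap.norm_le _ (by positivity)).2 fun u => by
      change ‖integralPairing μ (k.curry u) g‖ ≤ _
      rw [integralPairing_apply, mul_right_comm]
      refine norm_integral_le_of_norm_le_const (ae_of_all _ fun v => ?_)
      rw [norm_mul]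
      exact mul_le_mul_of_nonneg_right (k.norm_coe_le_norm (u, v)) (norm_nonneg _) |>.trans
        (mul_le_mul_of_nonneg_left (g.norm_coe_le_norm v) (norm_nonneg k)))

theorem integralOperator_apply (k : C(X × X, ℝ)) (g : C(X, ℝ)) (u : X) :
    integralOperator μ k g u = ∫ v, k (u, v) * g v ∂μ :=
  integralPairing_apply μ (k.curry u) g

theorem integralPairing_integralOperator [SecondCountableTopology X] (k : C(X × X, ℝ))
    (g f : C(X, ℝ)) :
    integralPairing μ (integralOperator μ k g) f =
      integralPairing μ g (integralOperator μ (k.comp .prodSwap) f) := by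
  have hcont : Continuous fun p : X × X => k p * g p.2 * f p.1 := by fun_prop
  have hint : Integrable (fun p : X × X => k p * g p.2 * f p.1) (μ.prod μ) :=
    hcont.integrable_of_hasCompactSupport (.of_compactSpace _)
  simp only [integralPairing_apply, integralOperator_apply, ContinuousMap.comp_apply,
    ContinuousMap.prodSwap_apply, ← integral_mul_const, ← integral_const_mul]
  rw [integral_integral_swap hint]
  congr 1 with u
  congr 1 with v
  ring

section QuadraticSource

variable (lam a1 a2 a3 a4 : C(X × X, ℝ))

def quadraticSource (r : C(X, ℝ)) : C(X, ℝ) :=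
  (2 : ℝ) • (r * integralOperator μ (a1 * a2 * lam) r)
    + (2 : ℝ) • (r * integralOperator μ ((lam * a3 * a4).comp .prodSwap) r)

theorem continuous_quadraticSource : Continuous (quadraticSource μ lam a1 a2 a3 a4) := by
  unfold quadraticSource
  fun_prop

theorem quadraticSource_apply (r : C(X, ℝ)) (u : X) :
    quadraticSource μ lam a1 a2 a3 a4 r u =
      2 * (∫ v, r u * r v * a1 (u, v) * a2 (u, v) * lam (u, v) ∂μ)
        + 2 * ∫ v, lam (v, u) * a3 (v, u) * a4 (v, u) * r u * r v ∂μ := by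
  simp only [quadraticSource, integralOperator_apply, ContinuousMap.add_apply,
    ContinuousMap.smul_apply, ContinuousMap.mul_apply, ContinuousMap.comp_apply,
    ContinuousMap.prodSwap_apply, smul_eq_mul, ← integral_const_mul]
  congr 1 <;> congr 1 with v <;> ring

theorem integralPairing_quadraticSource (r f : C(X, ℝ)) :
    integralPairing μ (quadraticSource μ lam a1 a2 a3 a4 r) f =
      2 * (∫ u, ∫ v, r u * r v * a1 (u, v) * a2 (u, v) * lam (u, v) * f u ∂μ ∂μ)
        + 2 * ∫ u, ∫ v, lam (v, u) * a3 (v, u) * a4 (v, u) * r u * r v * f u ∂μ ∂μ := by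
  rw [quadraticSource, map_add, map_smul, map_smul]
  simp only [add_apply, smul_apply, integralPairing_apply, integralOperator_apply,
    ContinuousMap.mul_apply, ContinuousMap.comp_apply, ContinuousMap.prodSwap_apply, smul_eq_mul,
    ← integral_const_mul, ← integral_mul_const]
  congr 1 <;> congr 1 with u <;> congr 1 with v <;> ring

end QuadraticSource

variable {μ}

theorem integralPairing_map_eq_comp [SecondCountableTopology X] {b c : C(X, ℝ)}
    {lam a1 a2 a3 a4 : C(X × X, ℝ)} {P Q : C(X, ℝ) →L[ℝ] C(X, ℝ)}
    (hP : ∀ f u, P f u = (c u ^ 2 - 1) * b u * f u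
      + f u * (∫ v, lam (u, v) * (a1 (u, v) ^ 2 - 1) ∂μ)
      + (∫ v, lam (u, v) * a2 (u, v) ^ 2 * f v ∂μ)
      + (∫ v, lam (v, u) * a3 (v, u) ^ 2 * f v ∂μ)
      + f u * (∫ v, lam (v, u) * (a4 (v, u) ^ 2 - 1) ∂μ))
    (hQ : ∀ f u, Q f u = (c u ^ 2 - 1) * b u * f u
      + f u * (∫ v, lam (u, v) * (a1 (u, v) ^ 2 - 1) ∂μ)
      + (∫ v, lam (v, u) * a2 (v, u) ^ 2 * f v ∂μ)
      + (∫ v, lam (u, v) * a3 (u, v) ^ 2 * f v ∂μ)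
      + f u * (∫ v, lam (v, u) * (a4 (v, u) ^ 2 - 1) ∂μ))
    (g : C(X, ℝ)) :
    integralPairing μ (P g) = (integralPairing μ g).comp Q := by
  set m : C(X, ℝ) := (c ^ 2 - 1) * b + integralOperator μ (lam * (a1 ^ 2 - 1)) 1
    + integralOperator μ ((lam * (a4 ^ 2 - 1)).comp .prodSwap) 1
  set α := lam * a2 ^ 2
  set β := (lam * a3 ^ 2).comp .prodSwap
  obtain ⟨hPK, hQK⟩ : P = .mul ℝ _ m + integralOperator μ α + integralOperator μ β ∧
      Q = .mul ℝ _ m + integralOperator μ (α.comp .prodSwap)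
        + integralOperator μ (β.comp .prodSwap) := by
    refine ⟨?_, ?_⟩ <;> ext f u <;>
      simp only [hP, hQ, m, α, β, integralOperator_apply, add_apply,
        ContinuousLinearMap.mul_apply', ContinuousMap.add_apply, ContinuousMap.mul_apply,
        ContinuousMap.sub_apply, ContinuousMap.pow_apply, ContinuousMap.one_apply,
        ContinuousMap.comp_apply, ContinuousMap.prodSwap_apply, mul_one] <;>
      ring
  ext f
  simp only [hPK, hQK, add_apply, map_add, ContinuousLinearMap.mul_apply',
    ContinuousLinearMap.comp_apply, integralPairing_mul_left, integralPairing_integralOperator]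

end IntegralPairing

theorem stmt8_general
    (b c : C(I01, ℝ)) (lam a1 a2 a3 a4 : C(I01 × I01, ℝ))
    (φ : C(I01, ℝ)) (T : ℝ)
    (P8 : C(I01, ℝ) →L[ℝ] C(I01, ℝ))
    (ρ : ℝ → C(I01, ℝ))
    (hρ : ∀ t ∈ Set.Ici (0 : ℝ), HasDerivWithinAt ρ (P8 (ρ t)) (Set.Ici 0) t)
    (P2 : C(I01, ℝ) →L[ℝ] C(I01, ℝ))
    (hP2 : ∀ (f : C(I01, ℝ)) (u : I01),
      P2 f u = (c u ^ 2 - 1) * b u * f u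
        + f u * (∫ v : I01, lam (u, v) * (a1 (u, v) ^ 2 - 1))
        + (∫ v : I01, lam (v, u) * a2 (v, u) ^ 2 * f v)
        + (∫ v : I01, lam (u, v) * a3 (u, v) ^ 2 * f v)
        + f u * (∫ v : I01, lam (v, u) * (a4 (v, u) ^ 2 - 1)))
    (l1 : ℝ → (C(I01, ℝ) →L[ℝ] ℝ))
    (hl1 : ∀ (t : ℝ) (f : C(I01, ℝ)),
      l1 t f = 2 * (∫ u : I01, ∫ v : I01,
          ρ t u * ρ t v * a1 (u, v) * a2 (u, v) * lam (u, v) * f u)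
        + 2 * ∫ u : I01, ∫ v : I01,
            lam (v, u) * a3 (v, u) * a4 (v, u) * ρ t u * ρ t v * f u)
    (P9 : C(I01, ℝ) →L[ℝ] C(I01, ℝ))
    (hP9 : ∀ (f : C(I01, ℝ)) (u : I01),
      P9 f u = (c u ^ 2 - 1) * b u * f u
        + f u * (∫ v : I01, lam (u, v) * (a1 (u, v) ^ 2 - 1))
        + (∫ v : I01, lam (u, v) * a2 (u, v) ^ 2 * f v)
        + (∫ v : I01, lam (v, u) * a3 (v, u) ^ 2 * f v)
        + f u * (∫ v : I01, lam (v, u) * (a4 (v, u) ^ 2 - 1)))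
    (lhat1 : ℝ → C(I01, ℝ))
    (hlhat1 : ∀ (t : ℝ) (u : I01),
      lhat1 t u = 2 * (∫ v : I01, ρ t u * ρ t v * a1 (u, v) * a2 (u, v) * lam (u, v))
        + 2 * ∫ v : I01, lam (v, u) * a3 (v, u) * a4 (v, u) * ρ t u * ρ t v)
    (θ0 : C(I01, ℝ) →L[ℝ] ℝ) (hθ0 : ∀ f : C(I01, ℝ), θ0 f = ∫ u : I01, φ u * f u)
    (θ : ℝ → (C(I01, ℝ) →L[ℝ] ℝ)) (hθinit : θ 0 = θ0)
    (hθ : ∀ t ∈ Set.Icc (0 : ℝ) T,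
      HasDerivWithinAt θ ((θ t).comp P2 + l1 t) (Set.Icc 0 T) t) :
    ∃ ϑ : ℝ → C(I01, ℝ),
      (ϑ 0 = φ ∧
        ∀ t ∈ Set.Icc (0 : ℝ) T,
          HasDerivWithinAt ϑ (P9 (ϑ t) + lhat1 t) (Set.Icc 0 T) t) ∧
      (∀ ϑ' : ℝ → C(I01, ℝ),
        (ϑ' 0 = φ ∧
          ∀ t ∈ Set.Icc (0 : ℝ) T,
            HasDerivWithinAt ϑ' (P9 (ϑ' t) + lhat1 t) (Set.Icc 0 T) t) →
        ∀ t ∈ Set.Icc (0 : ℝ) T, ϑ' t = ϑ t) ∧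
      ContinuousOn (fun p : ℝ × I01 => ϑ p.1 p.2) (Set.Icc 0 T ×ˢ Set.univ) ∧
      ∀ t ∈ Set.Icc (0 : ℝ) T, ∀ f : C(I01, ℝ),
        θ t f = ∫ u : I01, ϑ t u * f u := by
  have hρc : ContinuousOn ρ (Ici 0) := fun t ht => (hρ t ht).continuousWithinAt
  have hlhat : lhat1 = fun t => quadraticSource volume lam a1 a2 a3 a4 (ρ t) :=
    funext fun t => ContinuousMap.ext fun u => by rw [hlhat1, quadraticSource_apply]
  have hlc : ContinuousOn lhat1 (Ici 0) :=
    hlhat ▸ (continuous_quadraticSource volume lam a1 a2 a3 a4).comp_continuousOn hρc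
  obtain ⟨ϑ, hϑ0, hϑ⟩ := exists_linear_ODE_solution P9 (fun t => lhat1 (max t 0))
    (hlc.comp_continuous (continuous_id.max continuous_const) fun t => le_max_right t 0) φ
  have hϑc : Continuous ϑ := continuous_iff_continuousAt.2 fun t => (hϑ t).continuousAt
  have hsol (t : ℝ) (ht : t ∈ Icc 0 T) :
      HasDerivWithinAt ϑ (P9 (ϑ t) + lhat1 t) (Icc 0 T) t := by
    simpa only [max_eq_left ht.1] using (hϑ t).hasDerivWithinAt
  have hθ_eq : EqOn θ (fun t => integralPairing volume (ϑ t)) (Icc 0 T) := by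
    refine linear_ODE_solution_map P9 lhat1 (integralPairing volume) (B := .precomp ℝ P2)
      (M := l1) (integralPairing_map_eq_comp hP9 hP2) (fun t => ?_) hsol hθ ?_
    · ext f
      rw [hlhat, hl1, integralPairing_quadraticSource]
    · ext f
      rw [hθinit, hθ0, hϑ0, integralPairing_apply]
  refine ⟨ϑ, ⟨hϑ0, hsol⟩, fun ϑ' h => linear_ODE_solution_unique P9 lhat1 h.2 hsol
    (h.1.trans hϑ0.symm), by fun_prop, fun t ht f => by rw [hθ_eq ht, integralPairing_apply]⟩

/-- existence and uniqueness of the `C[0,1]`-valued solution `ϑ` of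
`dϑ(t,·)/dt = P₉ϑ(t,·) + l̂_{1,t}`, `ϑ(0,·) = φ`; moreover `ϑ` is jointly continuous and
the solution `θ` of the dual-valued equation satisfies `θ_t(f) = ∫₀¹ ϑ(t,u) f(u) du`. -/
theorem stmt8
    (b c : C(I01, ℝ)) (lam a1 a2 a3 a4 : C(I01 × I01, ℝ))
    (hb : ∀ u, 0 ≤ b u) (hc : ∀ u, 0 ≤ c u)
    (hlam : ∀ p, 0 ≤ lam p) (ha1 : ∀ p, 0 ≤ a1 p) (ha2 : ∀ p, 0 ≤ a2 p)
    (ha3 : ∀ p, 0 ≤ a3 p) (ha4 : ∀ p, 0 ≤ a4 p)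
    (φ : C(I01, ℝ)) (T : ℝ) (hT : 0 < T)
    (P8 : C(I01, ℝ) →L[ℝ] C(I01, ℝ))
    (hP8 : ∀ (f : C(I01, ℝ)) (u : I01),
      P8 f u = b u * (c u - 1) * f u
        + f u * (∫ v : I01, lam (v, u) * (a4 (v, u) - 1))
        + f u * (∫ v : I01, lam (u, v) * (a1 (u, v) - 1))
        + (∫ v : I01, lam (u, v) * a2 (u, v) * f v)
        + (∫ v : I01, lam (v, u) * a3 (v, u) * f v))
    (ρ : ℝ → C(I01, ℝ)) (hρinit : ρ 0 = φ)
    (hρ : ∀ t ∈ Set.Ici (0 : ℝ), HasDerivWithinAt ρ (P8 (ρ t)) (Set.Ici 0) t)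
    (P2 : C(I01, ℝ) →L[ℝ] C(I01, ℝ))
    (hP2 : ∀ (f : C(I01, ℝ)) (u : I01),
      P2 f u = (c u ^ 2 - 1) * b u * f u
        + f u * (∫ v : I01, lam (u, v) * (a1 (u, v) ^ 2 - 1))
        + (∫ v : I01, lam (v, u) * a2 (v, u) ^ 2 * f v)
        + (∫ v : I01, lam (u, v) * a3 (u, v) ^ 2 * f v)
        + f u * (∫ v : I01, lam (v, u) * (a4 (v, u) ^ 2 - 1)))
    (l1 : ℝ → (C(I01, ℝ) →L[ℝ] ℝ))
    (hl1 : ∀ (t : ℝ) (f : C(I01, ℝ)),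
      l1 t f = 2 * (∫ u : I01, ∫ v : I01,
          ρ t u * ρ t v * a1 (u, v) * a2 (u, v) * lam (u, v) * f u)
        + 2 * ∫ u : I01, ∫ v : I01,
            lam (v, u) * a3 (v, u) * a4 (v, u) * ρ t u * ρ t v * f u)
    (P9 : C(I01, ℝ) →L[ℝ] C(I01, ℝ))
    (hP9 : ∀ (f : C(I01, ℝ)) (u : I01),
      P9 f u = (c u ^ 2 - 1) * b u * f u
        + f u * (∫ v : I01, lam (u, v) * (a1 (u, v) ^ 2 - 1))
        + (∫ v : I01, lam (u, v) * a2 (u, v) ^ 2 * f v)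
        + (∫ v : I01, lam (v, u) * a3 (v, u) ^ 2 * f v)
        + f u * (∫ v : I01, lam (v, u) * (a4 (v, u) ^ 2 - 1)))
    (lhat1 : ℝ → C(I01, ℝ))
    (hlhat1 : ∀ (t : ℝ) (u : I01),
      lhat1 t u = 2 * (∫ v : I01, ρ t u * ρ t v * a1 (u, v) * a2 (u, v) * lam (u, v))
        + 2 * ∫ v : I01, lam (v, u) * a3 (v, u) * a4 (v, u) * ρ t u * ρ t v)
    (θ0 : C(I01, ℝ) →L[ℝ] ℝ) (hθ0 : ∀ f : C(I01, ℝ), θ0 f = ∫ u : I01, φ u * f u)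
    (θ : ℝ → (C(I01, ℝ) →L[ℝ] ℝ)) (hθinit : θ 0 = θ0)
    (hθ : ∀ t ∈ Set.Icc (0 : ℝ) T,
      HasDerivWithinAt θ ((θ t).comp P2 + l1 t) (Set.Icc 0 T) t) :
    ∃ ϑ : ℝ → C(I01, ℝ),
      (ϑ 0 = φ ∧
        ∀ t ∈ Set.Icc (0 : ℝ) T,
          HasDerivWithinAt ϑ (P9 (ϑ t) + lhat1 t) (Set.Icc 0 T) t) ∧
      (∀ ϑ' : ℝ → C(I01, ℝ),
        (ϑ' 0 = φ ∧
          ∀ t ∈ Set.Icc (0 : ℝ) T,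
            HasDerivWithinAt ϑ' (P9 (ϑ' t) + lhat1 t) (Set.Icc 0 T) t) →
        ∀ t ∈ Set.Icc (0 : ℝ) T, ϑ' t = ϑ t) ∧
      ContinuousOn (fun p : ℝ × I01 => ϑ p.1 p.2) (Set.Icc 0 T ×ˢ Set.univ) ∧
      ∀ t ∈ Set.Icc (0 : ℝ) T, ∀ f : C(I01, ℝ),
        θ t f = ∫ u : I01, ϑ t u * f u :=
  stmt8_general b c lam a1 a2 a3 a4 φ T P8 ρ hρ P2 hP2 l1 hl1 P9 hP9 lhat1 hlhat1 θ0 hθ0 θ hθinit hθ
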